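/- arXiv:2506.01509 — 2 statements merged into one kernel-verified Lean document; each statement's English description precedes it below -/
import Mathlib

section
/- For every linear objective c with nonnegative coefficients on all of the variables y, (y^S), (δ^S), (d^S) (and not involving the γ variables), the infimum of c over the region D equals the infimum of c over the dual-flow polyhedron Q; in particular, from an optimal solution of the LP min{c over Q} one obtains an optimal solution of the LP min{c over D}. -/
/-- A finite graph: a finite vertex set and a finite set of (oriented representatives of) edges. -/
structure FinGraph (α : Type*) where
  verts : Finset α
  edges : Finset (α × α)

namespace FinGraph

variable {α : Type*}

/-- A matching: a set of edges of `G` that are pairwise vertex-disjoint. -/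
def IsMatching (G : FinGraph α) (M : Finset (α × α)) : Prop :=
  M ⊆ G.edges ∧ ∀ e ∈ M, ∀ f ∈ M, e ≠ f →
    e.1 ≠ f.1 ∧ e.1 ≠ f.2 ∧ e.2 ≠ f.1 ∧ e.2 ≠ f.2

open Classical in
/-- `ν(G)`: the maximum cardinality of a matching of `G`. -/
noncomputable def nu (G : FinGraph α) : ℕ :=
  (G.edges.powerset.filter fun M => G.IsMatching M).sup Finset.card

/-- Well-formedness: edges join two distinct vertices of the graph. -/
def WF (G : FinGraph α) : Prop :=
  ∀ e ∈ G.edges, e.1 ∈ G.verts ∧ e.2 ∈ G.verts ∧ e.1 ≠ e.2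

/-- `G` is bipartite with parts `V1`, `V2` (edges oriented from `V1` to `V2`). -/
def Bipartition [DecidableEq α] (G : FinGraph α) (V1 V2 : Finset α) : Prop :=
  G.verts ⊆ V1 ∪ V2 ∧ ∀ e ∈ G.edges, e.1 ∈ V1 ∧ e.2 ∈ V2

/-- The core of the assignment game on `G`: minimum fractional vertex covers of value `ν(G)`. -/
noncomputable def core (G : FinGraph α) : Set (α → ℝ) :=
  {y | (∀ v ∈ G.verts, 0 ≤ y v) ∧ (∀ e ∈ G.edges, 1 ≤ y e.1 + y e.2) ∧
    ∑ v ∈ G.verts, y v = (G.nu : ℝ)}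

/-- The subgraph of `G` induced by the vertex set `U`. -/
def induce [DecidableEq α] (G : FinGraph α) (U : Finset α) : FinGraph α :=
  ⟨G.verts ∩ U, G.edges.filter fun e => e.1 ∈ U ∧ e.2 ∈ U⟩

end FinGraph

/-- A real number is integral if it is an integer. -/
def IntegralReal (x : ℝ) : Prop := ∃ n : ℤ, x = (n : ℝ)

open FinGraph

variable {α σ : Type*}

/-- A point of the two-stage LP: first-stage allocation `y`, second-stage allocations `y^S`,
and deviation variables `δ^S`, `d^S`. -/
abbrev TwoStagePt (α σ : Type*) : Type _ :=
  (α → ℝ) × (σ → α → ℝ) × (σ → α → ℝ) × (σ → α → ℝ)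

/-- The relaxed feasible region `D` of the two-stage LP (no matching-number equalities). -/
def regionD [DecidableEq α] (G0 : FinGraph α) (G : σ → FinGraph α) :
    Set (TwoStagePt α σ) :=
  {p | (∀ v ∈ G0.verts, 0 ≤ p.1 v) ∧
       (∀ e ∈ G0.edges, 1 ≤ p.1 e.1 + p.1 e.2) ∧
       (∀ s : σ, (∀ v ∈ (G s).verts, 0 ≤ p.2.1 s v) ∧
         (∀ e ∈ (G s).edges, 1 ≤ p.2.1 s e.1 + p.2.1 s e.2)) ∧
       (∀ s : σ, ∀ v ∈ G0.verts ∩ (G s).verts,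
         p.1 v - p.2.1 s v ≤ p.2.2.1 s v ∧ p.2.1 s v - p.1 v ≤ p.2.2.2 s v ∧
         0 ≤ p.2.2.1 s v ∧ 0 ≤ p.2.2.2 s v)}

/-- The feasible region `P` of (2SAG-LP): `D` together with the matching-number equalities. -/
noncomputable def regionP [DecidableEq α] (G0 : FinGraph α) (G : σ → FinGraph α) :
    Set (TwoStagePt α σ) :=
  {p ∈ regionD G0 G |
    (∑ v ∈ G0.verts, p.1 v = (G0.nu : ℝ)) ∧
    ∀ s : σ, ∑ v ∈ (G s).verts, p.2.1 s v = ((G s).nu : ℝ)}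

/-- The dual-flow polyhedron `Q`: points of `D` extended by potentials `γ`, `γ^S`. -/
def regionQ [DecidableEq α] (G0 : FinGraph α) (G : σ → FinGraph α) (V1 V2 : Finset α) :
    Set (TwoStagePt α σ × ((α → ℝ) × (σ → α → ℝ))) :=
  {q | (∀ v ∈ G0.verts ∩ V1, 1 ≤ q.2.1 v + q.1.1 v) ∧
       (∀ s : σ, ∀ v ∈ (G s).verts ∩ V1, 1 ≤ q.2.2 s v + q.1.2.1 s v) ∧
       (∀ s : σ, ∀ v ∈ (G0.verts ∩ (G s).verts) ∩ V1,
          0 ≤ q.2.1 v - q.2.2 s v + q.1.2.2.1 s v ∧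
          0 ≤ q.2.2 s v - q.2.1 v + q.1.2.2.2 s v) ∧
       (∀ e ∈ G0.edges, e.1 ∈ V1 → e.2 ∈ V2 → 0 ≤ q.2.1 e.2 - q.2.1 e.1) ∧
       (∀ s : σ, ∀ e ∈ (G s).edges, e.1 ∈ V1 → e.2 ∈ V2 →
          0 ≤ q.2.2 s e.2 - q.2.2 s e.1) ∧
       (∀ v ∈ G0.verts ∩ V2, 0 ≤ q.1.1 v - q.2.1 v) ∧
       (∀ s : σ, ∀ v ∈ (G s).verts ∩ V2, 0 ≤ q.1.2.1 s v - q.2.2 s v) ∧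
       (∀ s : σ, ∀ v ∈ (G0.verts ∩ (G s).verts) ∩ V2,
          0 ≤ q.2.2 s v - q.2.1 v + q.1.2.2.1 s v ∧
          0 ≤ q.2.1 v - q.2.2 s v + q.1.2.2.2 s v) ∧
       (∀ v ∈ G0.verts, 0 ≤ q.1.1 v) ∧
       (∀ s : σ, ∀ v ∈ (G s).verts, 0 ≤ q.1.2.1 s v) ∧
       (∀ s : σ, ∀ v ∈ G0.verts ∩ (G s).verts,
          0 ≤ q.1.2.2.1 s v ∧ 0 ≤ q.1.2.2.2 s v)}

/-- A linear objective on the `(y, y^S, δ^S, d^S)` variables, with coefficient functions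
`cy`, `cyS`, `cδ`, `cd`. -/
def objC [DecidableEq α] [Fintype σ] (G0 : FinGraph α) (G : σ → FinGraph α)
    (cy : α → ℝ) (cyS cδ cd : σ → α → ℝ) (p : TwoStagePt α σ) : ℝ :=
  ∑ v ∈ G0.verts, cy v * p.1 v
    + ∑ s : σ, ∑ v ∈ (G s).verts, cyS s v * p.2.1 s v
    + ∑ s : σ, ∑ v ∈ G0.verts ∩ (G s).verts,
        (cδ s v * p.2.2.1 s v + cd s v * p.2.2.2 s v)

/-! Substituting `γ = 1 - y` on `V1` and `γ = y` on `V2` (in every scenario) turns the edge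
inequalities `y_u + y_v ≥ 1` into the monotonicity constraints `γ_v ≥ γ_u` of `Q`, and turns the
coupling constraints of `D` into those of `Q`; so each point of `D` extends to a point of `Q` of
the same value. Conversely, undoing the substitution on the potentials of a point of `Q` and
truncating at `0` gives a point of `D` whose `y`-parts lie below those of the given point, so,
the coefficients being nonnegative, its value is no larger. Hence both value sets have the same
lower bounds, and the same infimum. -/

lemma max_zero_sub_max_zero_le {a b c : ℝ} (h : a - b ≤ c) (hc : 0 ≤ c) :
    max 0 a - max 0 b ≤ c :=
  (max_sub_max_le_max 0 a 0 b).trans (max_le (by rwa [sub_self]) h)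

section

variable [DecidableEq α]

def flipOn (V1 : Finset α) (f : α → ℝ) (v : α) : ℝ :=
  if v ∈ V1 then 1 - f v else f v

section flipOn

variable {V1 V2 : Finset α} {f g : α → ℝ} {u v : α}

lemma flipOn_of_mem (hv : v ∈ V1) : flipOn V1 f v = 1 - f v := if_pos hv

lemma flipOn_of_notMem (hv : v ∉ V1) : flipOn V1 f v = f v := if_neg hv

lemma flipOn_le_of_mem_union (hv : v ∈ V1 ∪ V2) (h1 : v ∈ V1 → 1 ≤ f v + g v)
    (h2 : v ∈ V2 → 0 ≤ g v - f v) : flipOn V1 f v ≤ g v := by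
  by_cases hv1 : v ∈ V1
  · rw [flipOn_of_mem hv1]; linarith [h1 hv1]
  · have hv2 : v ∈ V2 := (Finset.mem_union.mp hv).resolve_left hv1
    rw [flipOn_of_notMem hv1]; linarith [h2 hv2]

lemma flipOn_sub_flipOn_le_of_mem_union {c : ℝ} (hv : v ∈ V1 ∪ V2)
    (h1 : v ∈ V1 → 0 ≤ f v - g v + c) (h2 : v ∈ V2 → 0 ≤ g v - f v + c) :
    flipOn V1 f v - flipOn V1 g v ≤ c := by
  by_cases hv1 : v ∈ V1
  · rw [flipOn_of_mem hv1, flipOn_of_mem hv1]; linarith [h1 hv1]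
  · have hv2 : v ∈ V2 := (Finset.mem_union.mp hv).resolve_left hv1
    rw [flipOn_of_notMem hv1, flipOn_of_notMem hv1]; linarith [h2 hv2]

lemma one_le_max_flipOn_add_max_flipOn (hu : u ∈ V1) (hv : v ∉ V1) (h : 0 ≤ f v - f u) :
    1 ≤ max 0 (flipOn V1 f u) + max 0 (flipOn V1 f v) := by
  rw [flipOn_of_mem hu, flipOn_of_notMem hv]
  linarith [le_max_right 0 (1 - f u), le_max_right 0 (f v)]

end flipOn

def liftToQ (V1 : Finset α) (p : TwoStagePt α σ) :
    TwoStagePt α σ × ((α → ℝ) × (σ → α → ℝ)) :=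
  (p, flipOn V1 p.1, fun s => flipOn V1 (p.2.1 s))

def projectToD (V1 : Finset α) (q : TwoStagePt α σ × ((α → ℝ) × (σ → α → ℝ))) :
    TwoStagePt α σ :=
  (fun v => max 0 (flipOn V1 q.2.1 v), fun s v => max 0 (flipOn V1 (q.2.2 s) v),
    q.1.2.2.1, q.1.2.2.2)

variable {G0 : FinGraph α} {G : σ → FinGraph α} {V1 V2 : Finset α}

lemma liftToQ_mem_regionQ (hdisj : Disjoint V1 V2) {p : TwoStagePt α σ}
    (hp : p ∈ regionD G0 G) : liftToQ V1 p ∈ regionQ G0 G V1 V2 := by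
  obtain ⟨hy, hcov, hyS, hlink⟩ := hp
  have hV2 : ∀ {v}, v ∈ V2 → v ∉ V1 := fun hv => Finset.disjoint_right.mp hdisj hv
  refine ⟨?_, ?_, ?_, ?_, ?_, ?_, ?_, ?_, hy, fun s => (hyS s).1,
    fun s v hv => (hlink s v hv).2.2⟩
  · intro v hv
    dsimp only [liftToQ]; rw [flipOn_of_mem (Finset.mem_inter.mp hv).2]; linarith
  · intro s v hv
    dsimp only [liftToQ]; rw [flipOn_of_mem (Finset.mem_inter.mp hv).2]; linarith
  · intro s v hv
    obtain ⟨hv0, hv1⟩ := Finset.mem_inter.mp hv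
    obtain ⟨h1, h2, -⟩ := hlink s v hv0
    simp only [liftToQ, flipOn_of_mem hv1]
    constructor <;> linarith
  · intro e he he1 he2
    dsimp only [liftToQ]; rw [flipOn_of_mem he1, flipOn_of_notMem (hV2 he2)]; linarith [hcov e he]
  · intro s e he he1 he2
    dsimp only [liftToQ]; rw [flipOn_of_mem he1, flipOn_of_notMem (hV2 he2)]; linarith [(hyS s).2 e he]
  · intro v hv
    dsimp only [liftToQ]; rw [flipOn_of_notMem (hV2 (Finset.mem_inter.mp hv).2), sub_self]
  · intro s v hv
    dsimp only [liftToQ]; rw [flipOn_of_notMem (hV2 (Finset.mem_inter.mp hv).2), sub_self]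
  · intro s v hv
    obtain ⟨hv0, hv2⟩ := Finset.mem_inter.mp hv
    obtain ⟨h1, h2, -⟩ := hlink s v hv0
    simp only [liftToQ, flipOn_of_notMem (hV2 hv2)]
    constructor <;> linarith

lemma projectToD_mem_regionD (hdisj : Disjoint V1 V2) (hbip0 : G0.Bipartition V1 V2)
    (hbips : ∀ s : σ, (G s).Bipartition V1 V2)
    {q : TwoStagePt α σ × ((α → ℝ) × (σ → α → ℝ))} (hq : q ∈ regionQ G0 G V1 V2) :
    projectToD V1 q ∈ regionD G0 G := by
  obtain ⟨-, -, hlink1, hmono0, hmonoS, -, -, hlink2, -, -, hdev⟩ := hq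
  have hV2 : ∀ {v}, v ∈ V2 → v ∉ V1 := fun hv => Finset.disjoint_right.mp hdisj hv
  refine ⟨fun v _ => le_max_left _ _, fun e he => ?_,
    fun s => ⟨fun v _ => le_max_left _ _, fun e he => ?_⟩, fun s v hv => ?_⟩
  · obtain ⟨he1, he2⟩ := hbip0.2 e he
    exact one_le_max_flipOn_add_max_flipOn he1 (hV2 he2) (hmono0 e he he1 he2)
  · obtain ⟨he1, he2⟩ := (hbips s).2 e he
    exact one_le_max_flipOn_add_max_flipOn he1 (hV2 he2) (hmonoS s e he he1 he2)
  · have hv12 : v ∈ V1 ∪ V2 := hbip0.1 (Finset.mem_inter.mp hv).1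
    have hmem : ∀ W : Finset α, v ∈ W → v ∈ (G0.verts ∩ (G s).verts) ∩ W :=
      fun W hW => Finset.mem_inter.mpr ⟨hv, hW⟩
    obtain ⟨hδ, hd⟩ := hdev s v hv
    refine ⟨max_zero_sub_max_zero_le ?_ hδ, max_zero_sub_max_zero_le ?_ hd, hδ, hd⟩
    · exact flipOn_sub_flipOn_le_of_mem_union hv12 (fun h => (hlink1 s v (hmem V1 h)).1)
        (fun h => (hlink2 s v (hmem V2 h)).1)
    · exact flipOn_sub_flipOn_le_of_mem_union hv12 (fun h => (hlink1 s v (hmem V1 h)).2)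
        (fun h => (hlink2 s v (hmem V2 h)).2)

lemma objC_le_objC_of_le [Fintype σ] {cy : α → ℝ} {cyS cδ cd : σ → α → ℝ}
    (hcy : ∀ v ∈ G0.verts, 0 ≤ cy v) (hcyS : ∀ s : σ, ∀ v ∈ (G s).verts, 0 ≤ cyS s v)
    {p p' : TwoStagePt α σ} (hy : ∀ v ∈ G0.verts, p.1 v ≤ p'.1 v)
    (hyS : ∀ s : σ, ∀ v ∈ (G s).verts, p.2.1 s v ≤ p'.2.1 s v) (hdev : p.2.2 = p'.2.2) :
    objC G0 G cy cyS cδ cd p ≤ objC G0 G cy cyS cδ cd p' := by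
  unfold objC
  rw [hdev]
  gcongr with v hv s - v hv
  exacts [hcy v hv, hy v hv, hcyS s v hv, hyS s v hv]

lemma objC_projectToD_le [Fintype σ] (hbip0 : G0.Bipartition V1 V2)
    (hbips : ∀ s : σ, (G s).Bipartition V1 V2) {cy : α → ℝ} {cyS cδ cd : σ → α → ℝ}
    (hcy : ∀ v ∈ G0.verts, 0 ≤ cy v) (hcyS : ∀ s : σ, ∀ v ∈ (G s).verts, 0 ≤ cyS s v)
    {q : TwoStagePt α σ × ((α → ℝ) × (σ → α → ℝ))} (hq : q ∈ regionQ G0 G V1 V2) :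
    objC G0 G cy cyS cδ cd (projectToD V1 q) ≤ objC G0 G cy cyS cδ cd q.1 := by
  obtain ⟨hcov0, hcovS, -, -, -, hdom0, hdomS, -, hy, hyS, -⟩ := hq
  refine objC_le_objC_of_le hcy hcyS (fun v hv => max_le (hy v hv) ?_)
    (fun s v hv => max_le (hyS s v hv) ?_) rfl
  · exact flipOn_le_of_mem_union (hbip0.1 hv) (fun h => hcov0 v (Finset.mem_inter.mpr ⟨hv, h⟩))
      (fun h => hdom0 v (Finset.mem_inter.mpr ⟨hv, h⟩))
  · exact flipOn_le_of_mem_union ((hbips s).1 hv)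
      (fun h => hcovS s v (Finset.mem_inter.mpr ⟨hv, h⟩))
      (fun h => hdomS s v (Finset.mem_inter.mpr ⟨hv, h⟩))

end

theorem sInf_objC_regionD_eq_regionQ_general [DecidableEq α] [Fintype σ]
    (G0 : FinGraph α) (G : σ → FinGraph α) (V1 V2 : Finset α)
    (hdisj : Disjoint V1 V2)
    (hbip0 : G0.Bipartition V1 V2) (hbips : ∀ s : σ, (G s).Bipartition V1 V2)
    (cy : α → ℝ) (cyS cδ cd : σ → α → ℝ)
    (hcy : ∀ v ∈ G0.verts, 0 ≤ cy v)
    (hcyS : ∀ s : σ, ∀ v ∈ (G s).verts, 0 ≤ cyS s v) :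
    sInf (objC G0 G cy cyS cδ cd '' regionD G0 G) =
      sInf ((fun q => objC G0 G cy cyS cδ cd q.1) '' regionQ G0 G V1 V2) := by
  refine csInf_eq_csInf_of_forall_exists_le ?_ ?_
  · rintro _ ⟨p, hp, rfl⟩
    exact ⟨_, ⟨liftToQ V1 p, liftToQ_mem_regionQ hdisj hp, rfl⟩, le_rfl⟩
  · rintro _ ⟨q, hq, rfl⟩
    exact ⟨_, ⟨projectToD V1 q, projectToD_mem_regionD hdisj hbip0 hbips hq, rfl⟩,
      objC_projectToD_le hbip0 hbips hcy hcyS hq⟩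

/-- For every linear objective `c` with nonnegative coefficients on the
variables `y, y^S, δ^S, d^S` (and not involving the `γ` variables), the infimum of `c` over the
region `D` equals the infimum of `c` over the dual-flow polyhedron `Q`. -/
theorem sInf_objC_regionD_eq_regionQ [DecidableEq α] [Fintype σ]
    (G0 : FinGraph α) (G : σ → FinGraph α) (V1 V2 : Finset α)
    (hdisj : Disjoint V1 V2)
    (hWF0 : G0.WF) (hWFs : ∀ s : σ, (G s).WF)
    (hbip0 : G0.Bipartition V1 V2) (hbips : ∀ s : σ, (G s).Bipartition V1 V2)
    (cy : α → ℝ) (cyS cδ cd : σ → α → ℝ)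
    (hcy : ∀ v ∈ G0.verts, 0 ≤ cy v)
    (hcyS : ∀ s : σ, ∀ v ∈ (G s).verts, 0 ≤ cyS s v)
    (hcδ : ∀ s : σ, ∀ v ∈ G0.verts ∩ (G s).verts, 0 ≤ cδ s v)
    (hcd : ∀ s : σ, ∀ v ∈ G0.verts ∩ (G s).verts, 0 ≤ cd s v) :
    sInf (objC G0 G cy cyS cδ cd '' regionD G0 G) =
      sInf ((fun q => objC G0 G cy cyS cδ cd q.1) '' regionQ G0 G V1 V2) :=
  sInf_objC_regionD_eq_regionQ_general G0 G V1 V2 hdisj hbip0 hbips cy cyS cδ cd hcy hcyS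
end

section
/- In the hardness-reduction graph G_0 built from an arbitrary finite graph G, every core element y ∈ core(G_0) satisfies y_{β_1} = y_{β_2} = 0 and y_α = 1. -/
open FinGraph

variable {V : Type*} [Fintype V] [DecidableEq V]

/-- The degree of `v`: the number of edges of `E` containing `v`. -/
def degE (E : Finset (Sym2 V)) (v : V) : ℕ := (E.filter fun e => v ∈ e).card

/-- The vertex universe of the hardness-reduction graph: copies `(v, j)` of original vertices,
edge-vertices, and three extra vertices `α = redAlpha`, `β₁ = redBeta1`, `β₂ = redBeta2`. -/
abbrev RedVert (V : Type*) : Type _ := (V × ℕ) ⊕ (Sym2 V ⊕ Fin 3)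

/-- The copy-vertex `v_j`. -/
def redCopy (v : V) (j : ℕ) : RedVert V := Sum.inl (v, j)

/-- The edge-vertex corresponding to `e`. -/
def redEdgeVert (e : Sym2 V) : RedVert V := Sum.inr (Sum.inl e)

/-- The special vertex `α`. -/
def redAlpha (V : Type*) : RedVert V := Sum.inr (Sum.inr 0)

/-- The special vertex `β₁`. -/
def redBeta1 (V : Type*) : RedVert V := Sum.inr (Sum.inr 1)

/-- The special vertex `β₂`. -/
def redBeta2 (V : Type*) : RedVert V := Sum.inr (Sum.inr 2)

/-- The hardness-reduction graph `G₀` built from the graph `G = (V, E)`: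
vertices are the copies `v_1, …, v_{d_v}` for `v ∈ V`, the edge-vertices `e ∈ E`, and
`α, β₁, β₂`; edges join each edge-vertex `e` to every copy of each endpoint of `e`, and `α`
to every edge-vertex and to `β₁` and `β₂`. -/
def redGraph (E : Finset (Sym2 V)) : FinGraph (RedVert V) where
  verts :=
    (Finset.univ.biUnion fun v : V =>
        (Finset.range (degE E v)).image fun j => redCopy v j)
      ∪ E.image redEdgeVert ∪ {redAlpha V, redBeta1 V, redBeta2 V}
  edges :=
    (E.biUnion fun e =>
        (Finset.univ.filter fun v : V => v ∈ e).biUnion fun v =>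
          (Finset.range (degE E v)).image fun j => (redEdgeVert e, redCopy v j))
      ∪ E.image (fun e => (redAlpha V, redEdgeVert e))
      ∪ {(redAlpha V, redBeta1 V), (redAlpha V, redBeta2 V)}

/-- `Π(S)`: the copies of the vertices of `S`, all edge-vertices, and `α`. -/
def redPi (E : Finset (Sym2 V)) (S : Finset V) : Finset (RedVert V) :=
  (S.biUnion fun v => (Finset.range (degE E v)).image fun j => redCopy v j)
    ∪ E.image redEdgeVert ∪ {redAlpha V}

/-- `S` is a vertex cover of `(V, E)`. -/
def IsVCover (E : Finset (Sym2 V)) (S : Finset V) : Prop :=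
  ∀ e ∈ E, ∃ v ∈ S, v ∈ e

namespace FinGraph

variable {α : Type*}

lemma exists_isMatching_card_eq_nu (G : FinGraph α) : ∃ M, G.IsMatching M ∧ M.card = G.nu := by
  classical
  have hempty : ∅ ∈ G.edges.powerset.filter fun M => G.IsMatching M :=
    Finset.mem_filter.2 ⟨Finset.empty_mem_powerset _, Finset.empty_subset _, by simp⟩
  obtain ⟨M, hM, hsup⟩ := Finset.exists_mem_eq_sup _ ⟨∅, hempty⟩ Finset.card
  exact ⟨M, (Finset.mem_filter.1 hM).2, by rw [nu]; convert hsup.symm⟩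

variable [DecidableEq α]

def matchedVerts (M : Finset (α × α)) : Finset α :=
  M.biUnion fun p => {p.1, p.2}

lemma mem_matchedVerts {M : Finset (α × α)} {v : α} :
    v ∈ matchedVerts M ↔ ∃ p ∈ M, v = p.1 ∨ v = p.2 := by
  simp [matchedVerts]

variable {G : FinGraph α} {M : Finset (α × α)}

lemma matchedVerts_subset (hG : G.WF) (hM : G.IsMatching M) : matchedVerts M ⊆ G.verts := by
  intro v hv
  obtain ⟨p, hp, rfl | rfl⟩ := mem_matchedVerts.1 hv
  exacts [(hG p (hM.1 hp)).1, (hG p (hM.1 hp)).2.1]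

lemma sum_matchedVerts (hG : G.WF) (hM : G.IsMatching M) (y : α → ℝ) :
    ∑ v ∈ matchedVerts M, y v = ∑ p ∈ M, (y p.1 + y p.2) := by
  have hdisj : (M : Set (α × α)).PairwiseDisjoint fun p => ({p.1, p.2} : Finset α) := by
    intro p hp q hq hpq
    have := hM.2 p hp q hq hpq
    simp only [Finset.disjoint_left, Finset.mem_insert, Finset.mem_singleton]
    rintro a (rfl | rfl) (h | h) <;> simp_all
  rw [matchedVerts, Finset.sum_biUnion hdisj]
  exact Finset.sum_congr rfl fun p hp => Finset.sum_pair (hG p (hM.1 hp)).2.2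

lemma core_slack_eq_zero (hG : G.WF) {y : α → ℝ} (hy : y ∈ G.core) (hM : G.IsMatching M)
    (hcard : M.card = G.nu) :
    ∑ v ∈ G.verts \ matchedVerts M, y v + ∑ p ∈ M, (y p.1 + y p.2 - 1) = 0 := by
  have hsplit := Finset.sum_sdiff (f := y) (matchedVerts_subset hG hM)
  rw [sum_matchedVerts hG hM, hy.2.2, ← hcard] at hsplit
  rw [Finset.sum_sub_distrib, Finset.sum_const, nsmul_one]
  linarith

lemma core_complementary_slackness (hG : G.WF) {y : α → ℝ} (hy : y ∈ G.core)
    (hM : G.IsMatching M) (hcard : M.card = G.nu) :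
    (∀ v ∈ G.verts, v ∉ matchedVerts M → y v = 0) ∧ ∀ p ∈ M, y p.1 + y p.2 = 1 := by
  have hfree : ∀ v ∈ G.verts \ matchedVerts M, 0 ≤ y v :=
    fun v hv => hy.1 v (Finset.mem_sdiff.1 hv).1
  have hslack : ∀ p ∈ M, 0 ≤ y p.1 + y p.2 - 1 :=
    fun p hp => sub_nonneg.2 (hy.2.1 p (hM.1 hp))
  obtain ⟨hfree0, hslack0⟩ := (add_eq_zero_iff_of_nonneg (Finset.sum_nonneg hfree)
    (Finset.sum_nonneg hslack)).1 (core_slack_eq_zero hG hy hM hcard)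
  refine ⟨fun v hv hvM => (Finset.sum_eq_zero_iff_of_nonneg hfree).1 hfree0 v
    (Finset.mem_sdiff.2 ⟨hv, hvM⟩), fun p hp => ?_⟩
  linarith [(Finset.sum_eq_zero_iff_of_nonneg hslack).1 hslack0 p hp]

end FinGraph

lemma mem_redGraph_edges {E : Finset (Sym2 V)} {p : RedVert V × RedVert V} :
    p ∈ (redGraph E).edges ↔
      (∃ e ∈ E, ∃ v ∈ e, ∃ j < degE E v, p = (redEdgeVert e, redCopy v j)) ∨
      (∃ e ∈ E, p = (redAlpha V, redEdgeVert e)) ∨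
      p = (redAlpha V, redBeta1 V) ∨ p = (redAlpha V, redBeta2 V) := by
  simp only [redGraph, Finset.mem_union, Finset.mem_biUnion, Finset.mem_image,
    Finset.mem_filter, Finset.mem_univ, true_and, Finset.mem_range,
    Finset.mem_insert, Finset.mem_singleton, or_assoc]
  simp only [eq_comm]

lemma redGraph_wf (E : Finset (Sym2 V)) : (redGraph E).WF := by
  intro p hp
  rcases mem_redGraph_edges.1 hp with ⟨e, he, v, -, j, hj, rfl⟩ | ⟨e, he, rfl⟩ | rfl | rfl <;>
    simp_all [redGraph, redCopy, redEdgeVert, redAlpha, redBeta1, redBeta2]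

lemma eq_of_redBeta_mem_redGraph_edge {E : Finset (Sym2 V)} {b : RedVert V}
    (hb : b = redBeta1 V ∨ b = redBeta2 V) {p : RedVert V × RedVert V}
    (hp : p ∈ (redGraph E).edges) (hbp : b = p.1 ∨ b = p.2) : p = (redAlpha V, b) := by
  rcases mem_redGraph_edges.1 hp with ⟨e, -, v, -, j, -, rfl⟩ | ⟨e, -, rfl⟩ | rfl | rfl <;>
    rcases hb with rfl | rfl <;> simp_all [redEdgeVert, redCopy, redAlpha, redBeta1, redBeta2]

lemma redAlpha_ne_snd_of_mem_redGraph_edges {E : Finset (Sym2 V)} {p : RedVert V × RedVert V}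
    (hp : p ∈ (redGraph E).edges) : p.2 ≠ redAlpha V := by
  rcases mem_redGraph_edges.1 hp with ⟨e, -, v, -, j, -, rfl⟩ | ⟨e, -, rfl⟩ | rfl | rfl <;>
    simp [redEdgeVert, redCopy, redAlpha, redBeta1, redBeta2]

lemma redAlpha_redBeta_mem_redGraph_edges (E : Finset (Sym2 V)) {b : RedVert V}
    (hb : b = redBeta1 V ∨ b = redBeta2 V) : (redAlpha V, b) ∈ (redGraph E).edges := by
  rcases hb with rfl | rfl <;> simp [redGraph]

lemma redAlpha_redBeta_mem_of_mem_matchedVerts {E : Finset (Sym2 V)}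
    {M : Finset (RedVert V × RedVert V)} (hM : M ⊆ (redGraph E).edges) {b : RedVert V}
    (hb : b = redBeta1 V ∨ b = redBeta2 V) (hbM : b ∈ matchedVerts M) :
    (redAlpha V, b) ∈ M := by
  obtain ⟨p, hp, hbp⟩ := mem_matchedVerts.1 hbM
  rwa [← eq_of_redBeta_mem_redGraph_edge hb (hM hp) hbp]

lemma exists_redBeta_not_mem_matchedVerts {E : Finset (Sym2 V)}
    {M : Finset (RedVert V × RedVert V)} (hM : (redGraph E).IsMatching M) :
    ∃ b, (b = redBeta1 V ∨ b = redBeta2 V) ∧ b ∉ matchedVerts M := by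
  by_contra! h
  have h1 := redAlpha_redBeta_mem_of_mem_matchedVerts hM.1 (.inl rfl) (h _ (.inl rfl))
  have h2 := redAlpha_redBeta_mem_of_mem_matchedVerts hM.1 (.inr rfl) (h _ (.inr rfl))
  exact (hM.2 _ h1 _ h2 (by simp [redBeta1, redBeta2])).1 rfl

lemma exists_redAlpha_mem_of_mem_matchedVerts {E : Finset (Sym2 V)}
    {M : Finset (RedVert V × RedVert V)} (hM : M ⊆ (redGraph E).edges)
    (hα : redAlpha V ∈ matchedVerts M) : ∃ w, (redAlpha V, w) ∈ M := by
  obtain ⟨p, hp, h | h⟩ := mem_matchedVerts.1 hα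
  · exact ⟨p.2, by rwa [h]⟩
  · exact absurd h.symm (redAlpha_ne_snd_of_mem_redGraph_edges (hM hp))

theorem redGraph_core_values_general (E : Finset (Sym2 V))
    (y : RedVert V → ℝ) (hy : y ∈ (redGraph E).core) :
    y (redBeta1 V) = 0 ∧ y (redBeta2 V) = 0 ∧ y (redAlpha V) = 1 := by
  have hwf := redGraph_wf E
  obtain ⟨M, hM, hcard⟩ := (redGraph E).exists_isMatching_card_eq_nu
  obtain ⟨hfree, htight⟩ := core_complementary_slackness hwf hy hM hcard
  have hα_ge : 1 ≤ y (redAlpha V) := by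
    obtain ⟨b, hb, hbM⟩ := exists_redBeta_not_mem_matchedVerts hM
    have hαb := redAlpha_redBeta_mem_redGraph_edges E hb
    linarith [hy.2.1 _ hαb, hfree b (hwf _ hαb).2.1 hbM]
  have hα_matched : redAlpha V ∈ matchedVerts M := by
    by_contra h
    have hα := (hwf _ (redAlpha_redBeta_mem_redGraph_edges E (.inl rfl))).1
    linarith [hfree _ hα h]
  obtain ⟨w, hw⟩ := exists_redAlpha_mem_of_mem_matchedVerts hM.1 hα_matched
  have hα_le : y (redAlpha V) ≤ 1 := by
    linarith [htight _ hw, hy.1 w (hwf _ (hM.1 hw)).2.1]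
  have hβ : ∀ b, b = redBeta1 V ∨ b = redBeta2 V → y b = 0 := by
    intro b hb
    by_cases hbM : b ∈ matchedVerts M
    · linarith [htight _ (redAlpha_redBeta_mem_of_mem_matchedVerts hM.1 hb hbM)]
    · exact hfree b (hwf _ (redAlpha_redBeta_mem_redGraph_edges E hb)).2.1 hbM
  exact ⟨hβ _ (.inl rfl), hβ _ (.inr rfl), le_antisymm hα_le hα_ge⟩

/-- In the hardness-reduction graph `G₀` built from an arbitrary finite simple
graph `G = (V, E)`, every core element `y ∈ core(G₀)` satisfies `y_{β₁} = y_{β₂} = 0` and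
`y_α = 1`. -/
theorem redGraph_core_values (E : Finset (Sym2 V)) (hE : ∀ e ∈ E, ¬ e.IsDiag)
    (y : RedVert V → ℝ) (hy : y ∈ (redGraph E).core) :
    y (redBeta1 V) = 0 ∧ y (redBeta2 V) = 0 ∧ y (redAlpha V) = 1 :=
  redGraph_core_values_general E y hy
end
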